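/- Let M be a finitely presented right R-module. The natural map M ⊗_R R((z)) → M((z)), sending m ⊗ Σ_{i≥k} r_i z^i to Σ_{i≥k} (m r_i) z^i, is an isomorphism of R((z))-modules. -/

import Mathlib

/-!
The functor `N ↦ N((z))` acts coefficientwise, so it is exact, while `N ↦ N ⊗[R] R((z))` is
right exact. The natural map between them is an isomorphism on `Rⁿ`, where both sides are
computed coordinatewise. For a presentation `Rᵐ → Rⁿ → M → 0` the five lemma then makes it an
isomorphism on `M`; its `R((z))`-linearity is a coefficient computation in the Cauchy product.
-/

open scoped TensorProduct

namespace HahnSeries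

section Map

variable {Γ R N P Q : Type*} [PartialOrder Γ]

theorem mem_range_map_iff [Zero N] [Zero P] {F : Type*} [FunLike F N P] [ZeroHomClass F N P]
    {g : F} {x : P⟦Γ⟧} :
    x ∈ Set.range (fun y : N⟦Γ⟧ => y.map g) ↔ ∀ a, x.coeff a ∈ Set.range g := by
  classical
  refine ⟨fun ⟨y, hy⟩ a => ⟨y.coeff a, by rw [← hy, map_coeff]⟩, fun h => ?_⟩
  choose y hy using h
  -- zero coefficients are lifted to zero, so that the lift has PWO support
  refine ⟨{ coeff a := if x.coeff a = 0 then 0 else y a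
            isPWO_support' := x.isPWO_support.mono fun a ha => ?_ }, ?_⟩
  · contrapose! ha
    simp [Function.notMem_support.mp ha]
  · ext a
    by_cases ha : x.coeff a = 0 <;> simp [ha, hy]

variable [Semiring R] [AddCommMonoid N] [Module R N] [AddCommMonoid P] [Module R P]
  [AddCommMonoid Q] [Module R Q]

variable (Γ) in
def mapLinearMap (g : N →ₗ[R] P) : N⟦Γ⟧ →ₗ[R] P⟦Γ⟧ where
  toFun x := x.map g
  map_add' _ _ := by ext; simp
  map_smul' _ _ := HahnSeries.map_smul g

@[simp]
theorem mapLinearMap_apply (g : N →ₗ[R] P) (x : N⟦Γ⟧) : mapLinearMap Γ g x = x.map g := rfl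

theorem mapLinearMap_surjective {g : N →ₗ[R] P} (hg : Function.Surjective g) :
    Function.Surjective (mapLinearMap Γ g) := fun x =>
  mem_range_map_iff.mpr fun a => hg (x.coeff a)

theorem exact_mapLinearMap {f : N →ₗ[R] P} {g : P →ₗ[R] Q} (h : Function.Exact f g) :
    Function.Exact (mapLinearMap Γ f) (mapLinearMap Γ g) := fun x => by
  simp only [mapLinearMap_apply, HahnSeries.ext_iff, funext_iff, map_coeff, coeff_zero, h _]
  exact mem_range_map_iff.symm

end Map

section Tensor

variable (Γ R N : Type*) [PartialOrder Γ] [CommSemiring R] [AddCommMonoid N] [Module R N]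

noncomputable def ofTensor : N ⊗[R] R⟦Γ⟧ →ₗ[R] N⟦Γ⟧ :=
  TensorProduct.lift <| LinearMap.mk₂ R (fun m f => f.map (LinearMap.toSpanSingleton R N m))
    (fun _ _ _ => by ext; simp [smul_add]) (fun _ _ _ => by ext; exact smul_comm _ _ _)
    (fun _ _ _ => by ext; simp [add_smul]) (fun _ _ _ => by ext; simp)

variable {Γ R N}

@[simp]
theorem ofTensor_tmul (m : N) (f : R⟦Γ⟧) :
    ofTensor Γ R N (m ⊗ₜ f) = f.map (LinearMap.toSpanSingleton R N m) := rfl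

theorem mapLinearMap_comp_ofTensor {P : Type*} [AddCommMonoid P] [Module R P] (g : N →ₗ[R] P) :
    mapLinearMap Γ g ∘ₗ ofTensor Γ R N = ofTensor Γ R P ∘ₗ g.rTensor (R⟦Γ⟧) :=
  TensorProduct.ext' fun m f => by ext; simp

variable (Γ R) in
theorem ofTensor_pi_bijective (ι : Type*) [Fintype ι] [DecidableEq ι] :
    Function.Bijective (ofTensor Γ R (ι → R)) := by
  let toTensor : (ι → R)⟦Γ⟧ →ₗ[R] (ι → R) ⊗[R] R⟦Γ⟧ :=
    ∑ i, TensorProduct.mk R _ _ (Pi.single i 1) ∘ₗ mapLinearMap Γ (LinearMap.proj i)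
  refine (LinearEquiv.ofLinearMap (ofTensor Γ R (ι → R)) toTensor ?_ ?_ :
    _ ≃ₗ[R] _).bijective
  · refine LinearMap.ext fun x => ?_
    ext a i
    simp [toTensor, coeff_sum, Finset.sum_apply, Pi.single_apply]
  · refine TensorProduct.ext' fun v f => ?_
    have hcoord : ∀ i, (f.map (LinearMap.toSpanSingleton R (ι → R) v)).map
        (LinearMap.proj (R := R) (φ := fun _ : ι => R) i) = v i • f := fun i => by
      ext; simp [mul_comm]
    conv_rhs => rw [pi_eq_sum_univ' v, TensorProduct.sum_tmul]
    simp [toTensor, hcoord, TensorProduct.smul_tmul]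

end Tensor

theorem ofTensor_bijective (Γ R N : Type*) [PartialOrder Γ] [CommRing R] [AddCommGroup N]
    [Module R N] [Module.FinitePresentation R N] : Function.Bijective (ofTensor Γ R N) := by
  obtain ⟨_, _, f, g, hf, hgf⟩ := Module.FinitePresentation.exists_fin' R N
  exact LinearMap.bijective_of_surjective_of_bijective_of_right_exact
    (g.rTensor _) (f.rTensor _) (mapLinearMap Γ g) (mapLinearMap Γ f)
    (ofTensor Γ R _) (ofTensor Γ R _) (ofTensor Γ R N)
    (mapLinearMap_comp_ofTensor g) (mapLinearMap_comp_ofTensor f)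
    (rTensor_exact _ hgf hf) (exact_mapLinearMap hgf)
    (ofTensor_pi_bijective Γ R _).2 (ofTensor_pi_bijective Γ R _)
    (LinearMap.rTensor_surjective _ hf) (mapLinearMap_surjective hf)

end HahnSeries

namespace HahnModule

theorem of_map_mul {Γ R V : Type*} [AddCommMonoid Γ] [PartialOrder Γ] [IsOrderedCancelAddMonoid Γ]
    [Semiring R] [AddCommMonoid V] [Module R V] (φ : R →ₗ[R] V) (g f : HahnSeries Γ R) :
    of R ((g * f).map φ) = g • of R (f.map φ) := by
  have hsupp : ((of R).symm (of R (f.map φ))).support ⊆ f.support :=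
    Function.support_comp_subset (map_zero φ) _
  ext a
  rw [coeff_smul_right f.isPWO_support hsupp, Equiv.symm_apply_apply, HahnSeries.map_coeff,
    ← HahnSeries.of_symm_smul_of_eq_mul,
    coeff_smul_right f.isPWO_support (by rw [Equiv.symm_apply_apply]), map_sum]
  exact Finset.sum_congr rfl fun _ _ => φ.map_smul _ _

end HahnModule

theorem finitePresentation_tensor_laurentSeries_iso
    (R M : Type) [CommRing R] [AddCommGroup M] [Module R M]
    [Module.FinitePresentation R M] :
    ∃ e : (M ⊗[R] LaurentSeries R) ≃+ HahnModule ℤ R M,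
      (∀ (m : M) (f : LaurentSeries R) (n : ℤ),
        ((HahnModule.of R).symm (e (m ⊗ₜ[R] f))).coeff n = f.coeff n • m) ∧
      (∀ (g f : LaurentSeries R) (m : M),
        e (m ⊗ₜ[R] (g * f)) = g • e (m ⊗ₜ[R] f)) :=
  ⟨(LinearEquiv.ofBijective _ (HahnSeries.ofTensor_bijective ℤ R M)).toAddEquiv.trans
      (AddEquiv.mk' (HahnModule.of R) fun _ _ => rfl),
    fun _ _ _ => rfl, fun g f _ => HahnModule.of_map_mul _ g f⟩
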